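/- arXiv:1702.03040 — 3 statements merged into one kernel-verified Lean document; each statement's English description precedes it below -/
import Mathlib

section
/- Let W ⊆ ℝ^d be nonempty and let w_1,…,w_{n+1} ∈ W, f_1,…,f_n ∈ ℝ^d, with Θ_t = −(1/t)∑_{i=1}^t f_i (and Θ_0 = 0). If for each t ≥ 1, w_{t+1} maximizes ⟨w, Θ_t⟩ over w ∈ W, then the FTL regret satisfies ∑_{t=1}^n ⟨f_t, w_t⟩ − min_{w∈W} ∑_{t=1}^n ⟨f_t, w⟩ = ∑_{t=1}^n t⟨w_{t+1} − w_t, Θ_t⟩. -/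
open scoped RealInnerProductSpace

theorem stmt2 {d : ℕ} (W : Set (EuclideanSpace ℝ (Fin d))) (hW : W.Nonempty)
    (n : ℕ) (f w : ℕ → EuclideanSpace ℝ (Fin d))
    (Θ : ℕ → EuclideanSpace ℝ (Fin d))
    (hΘ : ∀ t, Θ t = (-(1 / (t : ℝ))) • ∑ i ∈ Finset.Icc 1 t, f i)
    (hw : ∀ t, 1 ≤ t → t ≤ n + 1 → w t ∈ W)
    (hmax : ∀ t, 1 ≤ t → t ≤ n → ∀ v ∈ W, ⟪v, Θ t⟫ ≤ ⟪w (t + 1), Θ t⟫) :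
    (∑ t ∈ Finset.Icc 1 n, ⟪f t, w t⟫) -
        sInf ((fun v => ∑ t ∈ Finset.Icc 1 n, ⟪f t, v⟫) '' W) =
      ∑ t ∈ Finset.Icc 1 n, (t : ℝ) * ⟪w (t + 1) - w t, Θ t⟫ := by
  classical
  set S : ℕ → EuclideanSpace ℝ (Fin d) := fun t => ∑ i ∈ Finset.Icc 1 t, f i with hS
  have hinner : ∀ (t : ℕ) (v : EuclideanSpace ℝ (Fin d)),
      ∑ i ∈ Finset.Icc 1 t, ⟪f i, v⟫ = ⟪v, S t⟫ := by
    intro t v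
    rw [hS, inner_sum]
    exact Finset.sum_congr rfl fun i _ => real_inner_comm _ _
  have hΘv : ∀ (t : ℕ) (v : EuclideanSpace ℝ (Fin d)), 1 ≤ t →
      (t : ℝ) * ⟪v, Θ t⟫ = -⟪v, S t⟫ := by
    intro t v ht
    rw [hΘ, real_inner_smul_right, hS]
    have h0 : (t : ℝ) ≠ 0 := by
      exact_mod_cast Nat.one_le_iff_ne_zero.mp ht
    field_simp
  have tele : ∀ m : ℕ, ∑ t ∈ Finset.Icc 1 m, (t : ℝ) * ⟪w (t + 1) - w t, Θ t⟫
      = (∑ t ∈ Finset.Icc 1 m, ⟪f t, w t⟫) -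
        ∑ i ∈ Finset.Icc 1 m, ⟪f i, w (m + 1)⟫ := by
    intro m
    induction m with
    | zero => simp
    | succ m ih =>
      rw [Finset.sum_Icc_succ_top (by omega : 1 ≤ m + 1),
          Finset.sum_Icc_succ_top (by omega : 1 ≤ m + 1),
          Finset.sum_Icc_succ_top (by omega : 1 ≤ m + 1), ih]
      have h1 : ((m + 1 : ℕ) : ℝ) * ⟪w (m + 1 + 1) - w (m + 1), Θ (m + 1)⟫
          = ⟪w (m + 1), S (m + 1)⟫ - ⟪w (m + 1 + 1), S (m + 1)⟫ := by
        rw [hΘv (m + 1) _ (by omega), inner_sub_left]; ring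
      have e1 : ⟪w (m + 1), S (m + 1)⟫
          = (∑ i ∈ Finset.Icc 1 m, ⟪f i, w (m + 1)⟫) + ⟪f (m + 1), w (m + 1)⟫ := by
        rw [← hinner, Finset.sum_Icc_succ_top (by omega : 1 ≤ m + 1)]
      have e2 : ⟪w (m + 1 + 1), S (m + 1)⟫
          = (∑ i ∈ Finset.Icc 1 m, ⟪f i, w (m + 1 + 1)⟫) + ⟪f (m + 1), w (m + 1 + 1)⟫ := by
        rw [← hinner, Finset.sum_Icc_succ_top (by omega : 1 ≤ m + 1)]
      rw [h1, e1, e2]; ring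
  rcases Nat.eq_zero_or_pos n with h0 | hn
  · subst h0
    have himg : (fun v => ∑ t ∈ Finset.Icc 1 0, ⟪f t, v⟫) '' W = {(0 : ℝ)} := by
      have : (fun v : EuclideanSpace ℝ (Fin d) => ∑ t ∈ Finset.Icc 1 0, ⟪f t, v⟫)
          = fun _ => (0 : ℝ) := by
        funext v; simp
      rw [this]
      exact Set.Nonempty.image_const hW 0
    rw [himg]; simp
  · have hkey : sInf ((fun v => ∑ t ∈ Finset.Icc 1 n, ⟪f t, v⟫) '' W)
        = ∑ i ∈ Finset.Icc 1 n, ⟪f i, w (n + 1)⟫ := by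
      apply IsLeast.csInf_eq
      constructor
      · exact ⟨w (n + 1), hw (n + 1) (by omega) (by omega), rfl⟩
      · rintro x ⟨v, hv, rfl⟩
        have h := hmax n hn le_rfl v hv
        show (∑ i ∈ Finset.Icc 1 n, ⟪f i, w (n + 1)⟫) ≤ ∑ t ∈ Finset.Icc 1 n, ⟪f t, v⟫
        rw [hinner n v, hinner n (w (n + 1))]
        rw [hΘ, real_inner_smul_right, real_inner_smul_right] at h
        have hpos : (0 : ℝ) < 1 / n := by
          have : (0 : ℝ) < n := by exact_mod_cast hn
          positivity
        nlinarith [h, hpos]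
    rw [hkey, tele n]
end

section
/- Let W = {w ∈ ℝ^d : ‖w‖₂ ≤ 1} be the Euclidean unit ball, F ∈ ℝ^d, t ≥ 1, σ = ‖F‖₂/√(‖F‖₂² + t + 2), and w = −σ·F/‖F‖₂ (with w = 0 if F = 0). Then for every f ∈ ℝ^d with ‖f‖₂ ≤ 1, √(‖F + f‖₂² + t + 1) + ⟨f, w⟩ ≤ √(‖F‖₂² + t) + 2/(√(‖F‖₂² + t + 2) + √(‖F‖₂² + t)). -/
open scoped RealInnerProductSpace

open Classical in
theorem stmt7 {d : ℕ} (F : EuclideanSpace ℝ (Fin d)) (t : ℝ) (ht : 1 ≤ t)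
    (σ : ℝ) (hσ : σ = ‖F‖ / Real.sqrt (‖F‖ ^ 2 + t + 2))
    (w : EuclideanSpace ℝ (Fin d))
    (hw : w = if F = 0 then 0 else -((σ / ‖F‖) • F)) :
    ∀ f : EuclideanSpace ℝ (Fin d), ‖f‖ ≤ 1 →
      Real.sqrt (‖F + f‖ ^ 2 + t + 1) + ⟪f, w⟫ ≤
        Real.sqrt (‖F‖ ^ 2 + t) +
          2 / (Real.sqrt (‖F‖ ^ 2 + t + 2) + Real.sqrt (‖F‖ ^ 2 + t)) := by
  intro f hf
  have hR0 : (0:ℝ) ≤ ‖F‖ := norm_nonneg F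
  have hf0 : (0:ℝ) ≤ ‖f‖ := norm_nonneg f
  set R := ‖F‖ with hR
  set p := ⟪f, F⟫ with hp
  set a := Real.sqrt (R ^ 2 + t) with ha
  set S := Real.sqrt (R ^ 2 + t + 2) with hS
  have ha2 : a ^ 2 = R ^ 2 + t := Real.sq_sqrt (by nlinarith)
  have hS2 : S ^ 2 = R ^ 2 + t + 2 := Real.sq_sqrt (by nlinarith)
  have ha0 : 0 ≤ a := Real.sqrt_nonneg _
  have hS0 : 0 < S := Real.sqrt_pos.mpr (by nlinarith)
  have hSa : 0 < S + a := by linarith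
  have hRHS : a + 2 / (S + a) = S := by
    have h2 : (2:ℝ) = (S - a) * (S + a) := by nlinarith
    rw [h2, mul_div_assoc, div_self (ne_of_gt hSa)]
    ring
  have hip : ⟪f, w⟫ = -(p / S) := by
    by_cases h : F = 0
    · simp [hw, h, hp]
    · have hRne : R ≠ 0 := by
        simpa [hR] using norm_ne_zero_iff.mpr h
      rw [hw, if_neg h, inner_neg_right, real_inner_smul_right, hσ, ← hp]
      field_simp
  have hp1 : p ≤ R := by
    have := real_inner_le_norm f F
    nlinarith
  have hp2 : -R ≤ p := by
    have := abs_real_inner_le_norm f F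
    have h1 : |p| ≤ ‖f‖ * ‖F‖ := by simpa [hp] using this
    have := abs_le.mp h1
    nlinarith [this.1]
  have hexp : ‖F + f‖ ^ 2 = R ^ 2 + 2 * p + ‖f‖ ^ 2 := by
    rw [norm_add_sq_real, real_inner_comm]
  have hnn : 0 ≤ S + p / S := by
    have h1 : S + p / S = (S ^ 2 + p) / S := by field_simp
    rw [h1]
    apply div_nonneg _ (le_of_lt hS0)
    nlinarith
  have key : Real.sqrt (‖F + f‖ ^ 2 + t + 1) ≤ S + p / S := by
    rw [show S + p / S = Real.sqrt ((S + p / S) ^ 2) from (Real.sqrt_sq hnn).symm]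
    apply Real.sqrt_le_sqrt
    have hsq : (S + p / S) ^ 2 = S ^ 2 + 2 * p + (p / S) ^ 2 := by
      field_simp; ring
    rw [hsq, hexp, hS2]
    have hfs : ‖f‖ ^ 2 ≤ 1 := by
      calc ‖f‖ ^ 2 ≤ 1 ^ 2 := by gcongr
        _ = 1 := one_pow 2
    linarith [sq_nonneg (p / S)]
  rw [hip, hRHS]
  linarith
end

section
/- Let 0 < h, L with hL > 0, and for p ∈ (0,1) define φ^p ∈ (0,π) by cot(φ^p) = (1−2p)/(hL) and sin(φ^p) > 0, and set w^p = (cos φ^p, h sin φ^p), f^p = (2p−1, −L). Then for any 0 < P₁, P₂ < 1, ⟨w^{P₂} − w^{P₁}, f^{P₁}⟩ ≥ (hL/2)·((2P₂−2P₁)/(hL))² / (√(1+((1−2P₁)/(hL))²)·(1+((1−2P₂)/(hL))²)). -/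
lemma core11 (a b c s1 s2 : ℝ) (hc : 0 < c) (h1 : 0 < s1) (h2 : 0 < s2)
    (e1 : s1 ^ 2 = c ^ 2 + a ^ 2) (e2 : s2 ^ 2 = c ^ 2 + b ^ 2) :
    c / 2 * ((a - b) / c) ^ 2 / (s1 / c * (1 + (b / c) ^ 2)) ≤
      b / s2 * (-a) + c ^ 2 / s2 * (-1) - (a / s1 * (-a) + c ^ 2 / s1 * (-1)) := by
  have hb : 1 + (b / c) ^ 2 = s2 ^ 2 / c ^ 2 := by rw [e2]; field_simp
  have hrhs : b / s2 * (-a) + c ^ 2 / s2 * (-1) - (a / s1 * (-a) + c ^ 2 / s1 * (-1))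
      = s1 - (a * b + c ^ 2) / s2 := by
    have h1' : s1 ^ 2 / s1 = s1 := by rw [sq, mul_div_assoc, div_self h1.ne', mul_one]
    calc b / s2 * (-a) + c ^ 2 / s2 * (-1) - (a / s1 * (-a) + c ^ 2 / s1 * (-1))
        = s1 ^ 2 / s1 - (a * b + c ^ 2) / s2 := by rw [e1]; field_simp; ring
      _ = s1 - (a * b + c ^ 2) / s2 := by rw [h1']
  have eX : s1 ^ 2 * s2 ^ 2 = (c ^ 2 + a ^ 2) * (c ^ 2 + b ^ 2) := by rw [e1, e2]
  have main : (a - b) ^ 2 * c ^ 2 ≤ 2 * (s1 ^ 2 * s2 ^ 2) - 2 * ((a * b + c ^ 2) * (s1 * s2)) := by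
    nlinarith [sq_nonneg (s1 * s2 - (a * b + c ^ 2)), eX]
  rw [hb, hrhs, div_le_iff₀ (by positivity)]
  have expand : (s1 - (a * b + c ^ 2) / s2) * (s1 / c * (s2 ^ 2 / c ^ 2))
      = (s1 ^ 2 * s2 ^ 2 - (a * b + c ^ 2) * (s1 * s2)) / c ^ 3 := by
    field_simp
  rw [expand, le_div_iff₀ (by positivity : (0:ℝ) < c ^ 3)]
  have lhs_eq : c / 2 * ((a - b) / c) ^ 2 * c ^ 3 = (a - b) ^ 2 * c ^ 2 / 2 := by
    field_simp
  rw [lhs_eq]; linarith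

theorem stmt11 (h L : ℝ) (hh : 0 < h) (hL : 0 < L)
    (w : ℝ → ℝ × ℝ) (f : ℝ → ℝ × ℝ)
    (hw : ∀ p, w p = ((1 - 2 * p) / Real.sqrt ((h * L) ^ 2 + (1 - 2 * p) ^ 2),
      h * (h * L) / Real.sqrt ((h * L) ^ 2 + (1 - 2 * p) ^ 2)))
    (hf : ∀ p, f p = (2 * p - 1, -L))
    (P₁ P₂ : ℝ) (hP₁ : P₁ ∈ Set.Ioo (0 : ℝ) 1) (hP₂ : P₂ ∈ Set.Ioo (0 : ℝ) 1) :
    (w P₂).1 * (f P₁).1 + (w P₂).2 * (f P₁).2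
        - ((w P₁).1 * (f P₁).1 + (w P₁).2 * (f P₁).2) ≥
      h * L / 2 * ((2 * P₂ - 2 * P₁) / (h * L)) ^ 2 /
        (Real.sqrt (1 + ((1 - 2 * P₁) / (h * L)) ^ 2) *
          (1 + ((1 - 2 * P₂) / (h * L)) ^ 2)) := by
  have hc : 0 < h * L := mul_pos hh hL
  set c := h * L with hcdef
  set a := 1 - 2 * P₁ with hadef
  set b := 1 - 2 * P₂ with hbdef
  set s1 := Real.sqrt (c ^ 2 + a ^ 2) with hs1
  set s2 := Real.sqrt (c ^ 2 + b ^ 2) with hs2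
  have h1 : 0 < s1 := Real.sqrt_pos.mpr (by positivity)
  have h2 : 0 < s2 := Real.sqrt_pos.mpr (by positivity)
  have e1 : s1 ^ 2 = c ^ 2 + a ^ 2 := Real.sq_sqrt (by positivity)
  have e2 : s2 ^ 2 = c ^ 2 + b ^ 2 := Real.sq_sqrt (by positivity)
  have hsq : Real.sqrt (1 + (a / c) ^ 2) = s1 / c := by
    rw [show 1 + (a / c) ^ 2 = (c ^ 2 + a ^ 2) / c ^ 2 by field_simp,
      Real.sqrt_div (by positivity), Real.sqrt_sq hc.le]
  rw [hw, hw, hf, hsq]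
  have key := core11 a b c s1 s2 hc h1 h2 e1 e2
  rw [ge_iff_le]
  calc c / 2 * ((2 * P₂ - 2 * P₁) / c) ^ 2 / (s1 / c * (1 + (b / c) ^ 2))
      = c / 2 * ((a - b) / c) ^ 2 / (s1 / c * (1 + (b / c) ^ 2)) := by
        rw [hadef, hbdef]; ring_nf
    _ ≤ b / s2 * (-a) + c ^ 2 / s2 * (-1) - (a / s1 * (-a) + c ^ 2 / s1 * (-1)) := key
    _ = (b / s2) * (2 * P₁ - 1) + h * c / s2 * (-L)
        - ((a / s1) * (2 * P₁ - 1) + h * c / s1 * (-L)) := by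
        rw [hadef, hcdef]; ring
end
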